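/- arXiv:2511.00953 — 8 statements merged into one kernel-verified Lean document; each statement's English description precedes it below -/
import Mathlib

section
/- Let λ ≥ 2 and let r^I ≤ r^F < k^F be positive integers, ℓ > 0 a real number. Suppose x, y are reals with 0 ≤ x ≤ λ·k^F·ℓ, 0 ≤ y ≤ r^I·ℓ, and r^F·x + k^F·y ≥ λ·k^F·r^F·ℓ. Then x + y ≥ λ·k^F·ℓ − ((k^F − r^F)·r^I / r^F)·ℓ. -/
theorem bound1_case1_lp (lam kF rF rI : ℕ) (hlam : 2 ≤ lam)
    (hrI : 0 < rI) (hrF : 0 < rF) (hkF : 0 < kF)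
    (h1 : rI ≤ rF) (h2 : rF < kF) (ℓ : ℝ) (hℓ : 0 < ℓ) (x y : ℝ)
    (hx0 : 0 ≤ x) (hx1 : x ≤ (lam : ℝ) * kF * ℓ)
    (hy0 : 0 ≤ y) (hy1 : y ≤ (rI : ℝ) * ℓ)
    (hc : (rF : ℝ) * x + (kF : ℝ) * y ≥ (lam : ℝ) * kF * rF * ℓ) :
    x + y ≥ (lam : ℝ) * kF * ℓ - ((kF : ℝ) - rF) * rI / rF * ℓ := by
  have hrF' : (0 : ℝ) < rF := by exact_mod_cast hrF
  have hkr : (0 : ℝ) ≤ (kF : ℝ) - rF := by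
    have : (rF : ℝ) ≤ kF := by exact_mod_cast h2.le
    linarith
  rw [ge_iff_le, div_mul_eq_mul_div, sub_le_iff_le_add, ← sub_le_iff_le_add',
    le_div_iff₀ hrF']
  nlinarith [mul_le_mul_of_nonneg_left hy1 hkr]
end

section
/- Let λ ≥ 2 and let r^F ≤ r^I ≤ k^F be positive integers with r^F < k^F, ℓ > 0 a real. Suppose x, y are reals with 0 ≤ x ≤ λ·k^F·ℓ, 0 ≤ y ≤ r^I·ℓ, r^F·x + k^F·y ≥ λ·k^F·r^F·ℓ, and x ≥ λ·k^F·(λ−1)·r^F·ℓ / ((λ−1)·r^F + r^I). Then x + y ≥ λ·r^F·((λ−1)·k^F + r^I)·ℓ / ((λ−1)·r^F + r^I). -/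
theorem bound1_case2_lp (lam kF rF rI : ℕ) (hlam : 2 ≤ lam)
    (hrF : 0 < rF) (hrI : 0 < rI) (hkF : 0 < kF)
    (h1 : rF ≤ rI) (h2 : rI ≤ kF) (h3 : rF < kF) (ℓ : ℝ) (hℓ : 0 < ℓ) (x y : ℝ)
    (hx0 : 0 ≤ x) (hx1 : x ≤ (lam : ℝ) * kF * ℓ)
    (hy0 : 0 ≤ y) (hy1 : y ≤ (rI : ℝ) * ℓ)
    (hc1 : (rF : ℝ) * x + (kF : ℝ) * y ≥ (lam : ℝ) * kF * rF * ℓ)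
    (hc2 : x ≥ (lam : ℝ) * kF * ((lam : ℝ) - 1) * rF * ℓ / (((lam : ℝ) - 1) * rF + rI)) :
    x + y ≥ (lam : ℝ) * rF * (((lam : ℝ) - 1) * kF + rI) * ℓ / (((lam : ℝ) - 1) * rF + rI) := by
  have hlam1 : (1:ℝ) ≤ (lam:ℝ) := by
    have : (1:ℕ) ≤ lam := by omega
    exact_mod_cast this
  have hrF' : (0:ℝ) < rF := by exact_mod_cast hrF
  have hrI' : (0:ℝ) < rI := by exact_mod_cast hrI
  have hkF' : (0:ℝ) < kF := by exact_mod_cast hkF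
  have h3' : (rF:ℝ) < kF := by exact_mod_cast h3
  have hD : (0:ℝ) < ((lam:ℝ) - 1) * rF + rI := by nlinarith
  rw [ge_iff_le, div_le_iff₀ hD]
  rw [ge_iff_le, div_le_iff₀ hD] at hc2
  nlinarith [mul_le_mul_of_nonneg_left hc2 (le_of_lt (sub_pos.mpr h3')),
    mul_nonneg hx0 (le_of_lt hD), mul_pos hkF' hD]
end

section
/- Let λ ≥ 2, r^F < k^F, ℓ > 0, and suppose k^I := λ·k^F ≤ r^I where k^F ≤ r^I. If x, y are reals with 0 ≤ x ≤ λ·k^F·ℓ, 0 ≤ y ≤ r^I·ℓ, and r^F·x + k^F·y ≥ λ·k^F·r^F·ℓ, then x + y ≥ λ·r^F·ℓ; moreover the point (x, y) = (0, λ·r^F·ℓ) attains equality and satisfies ((λ−1)·r^F + k^F)/k^F · x + λ·(r^I − k^F)/r^I · y ≥ λ·(λ−1)·r^F·ℓ. -/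
theorem bound3_case1_lp (lam kF rF rI : ℕ) (hlam : 2 ≤ lam)
    (hrF : 0 < rF) (hkF : 0 < kF) (hrI : 0 < rI)
    (h1 : rF < kF) (h2 : kF ≤ rI) (h3 : lam * kF ≤ rI) (ℓ : ℝ) (hℓ : 0 < ℓ) :
    (∀ x y : ℝ, 0 ≤ x → x ≤ (lam : ℝ) * kF * ℓ → 0 ≤ y → y ≤ (rI : ℝ) * ℓ →
      (rF : ℝ) * x + (kF : ℝ) * y ≥ (lam : ℝ) * kF * rF * ℓ →
      x + y ≥ (lam : ℝ) * rF * ℓ) ∧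
    ((0 : ℝ) + (lam : ℝ) * rF * ℓ = (lam : ℝ) * rF * ℓ ∧
      (rF : ℝ) * 0 + (kF : ℝ) * ((lam : ℝ) * rF * ℓ) ≥ (lam : ℝ) * kF * rF * ℓ ∧
      (((lam : ℝ) - 1) * rF + kF) / kF * 0 +
        (lam : ℝ) * ((rI : ℝ) - kF) / rI * ((lam : ℝ) * rF * ℓ)
          ≥ (lam : ℝ) * ((lam : ℝ) - 1) * rF * ℓ) := by
  have hkF' : (0:ℝ) < kF := by exact_mod_cast hkF
  have hrI' : (0:ℝ) < rI := by exact_mod_cast rI.pos_of_ne_zero (by omega)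
  have h1' : (rF:ℝ) < kF := by exact_mod_cast h1
  have h3' : (lam:ℝ) * kF ≤ rI := by exact_mod_cast h3
  have hlam' : (2:ℝ) ≤ lam := by exact_mod_cast hlam
  have hrF' : (0:ℝ) < rF := by exact_mod_cast hrF
  refine ⟨?_, by ring, by nlinarith, ?_⟩
  · intro x y hx hxu hy hyu hc
    nlinarith
  · simp only [mul_zero, zero_add]
    rw [ge_iff_le, div_mul_eq_mul_div, le_div_iff₀ hrI']
    nlinarith [mul_nonneg (mul_nonneg (mul_pos hrF' hℓ).le (by linarith : (0:ℝ) ≤ lam)) (sub_nonneg.mpr h3')]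
end

section
/- Let λ ≥ 2, and let positive integers satisfy r^F < k^F < r^I < λ·k^F and λ·(k^F)² − (λ−1)·(k^F − r^F)·r^I ≥ 0, and let ℓ > 0. If x, y are reals with 0 ≤ x ≤ λ·k^F·ℓ, 0 ≤ y ≤ r^I·ℓ, r^F·x + k^F·y ≥ λ·k^F·r^F·ℓ, and ((λ−1)·r^F + k^F)·x/k^F + λ·(r^I − k^F)·y/r^I ≥ λ·(λ−1)·r^F·ℓ, then x + y ≥ λ²·(k^F)²·r^F·ℓ / (k^F·r^I − r^F·r^I + λ·k^F·r^F). -/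
theorem bound3_case2_lp (lam kF rF rI : ℕ) (hlam : 2 ≤ lam)
    (hrF : 0 < rF) (hkF : 0 < kF) (hrI : 0 < rI)
    (h1 : rF < kF) (h2 : kF < rI) (h3 : rI < lam * kF)
    (h4 : (lam : ℤ) * kF ^ 2 - ((lam : ℤ) - 1) * ((kF : ℤ) - rF) * rI ≥ 0)
    (ℓ : ℝ) (hℓ : 0 < ℓ) (x y : ℝ)
    (hx0 : 0 ≤ x) (hx1 : x ≤ (lam : ℝ) * kF * ℓ)
    (hy0 : 0 ≤ y) (hy1 : y ≤ (rI : ℝ) * ℓ)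
    (hc1 : (rF : ℝ) * x + (kF : ℝ) * y ≥ (lam : ℝ) * kF * rF * ℓ)
    (hc2 : (((lam : ℝ) - 1) * rF + kF) * x / kF + (lam : ℝ) * ((rI : ℝ) - kF) * y / rI
      ≥ (lam : ℝ) * ((lam : ℝ) - 1) * rF * ℓ) :
    x + y ≥ (lam : ℝ) ^ 2 * (kF : ℝ) ^ 2 * rF * ℓ /
      ((kF : ℝ) * rI - (rF : ℝ) * rI + (lam : ℝ) * kF * rF) := by
  have hkF' : (0:ℝ) < kF := by exact_mod_cast hkF
  have hrI' : (0:ℝ) < rI := by exact_mod_cast hrI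
  have hrF' : (0:ℝ) < rF := by exact_mod_cast hrF
  have h1' : (rF:ℝ) < kF := by exact_mod_cast h1
  have h2' : (kF:ℝ) < rI := by exact_mod_cast h2
  have h3' : (rI:ℝ) < (lam:ℝ) * kF := by exact_mod_cast h3
  have hlam' : (2:ℝ) ≤ (lam:ℝ) := by exact_mod_cast hlam
  have h4' : (0:ℝ) ≤ (lam:ℝ) * kF ^ 2 - ((lam:ℝ) - 1) * ((kF:ℝ) - rF) * rI := by
    have := h4
    push_cast at this ⊢
    exact_mod_cast this
  set L : ℝ := (lam : ℝ)
  have hS : (0:ℝ) < (kF:ℝ) * rI - (rF:ℝ) * rI + L * kF * rF := by nlinarith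
  -- clear denominators in hc2
  have hc2' : ((L - 1) * rF + kF) * x * rI + L * ((rI:ℝ) - kF) * y * kF
      ≥ L * (L - 1) * rF * kF * rI * ℓ := by
    have e1 : ((L - 1) * rF + kF) * x / kF * (kF * rI) = ((L - 1) * rF + kF) * x * rI := by
      field_simp
    have e2 : L * ((rI:ℝ) - kF) * y / rI * (kF * rI) = L * ((rI:ℝ) - kF) * y * kF := by
      field_simp
    have h := mul_le_mul_of_nonneg_right hc2.le (le_of_lt (by positivity : (0:ℝ) < kF * rI))
    rw [add_mul, e1, e2] at h
    linarith [h]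
  have hA : (0:ℝ) ≤ (L * kF ^ 2 - (L - 1) * ((kF:ℝ) - rF) * rI) * rI :=
    mul_nonneg h4' hrI'.le
  have hB : (0:ℝ) ≤ ((kF:ℝ) - rF) * rI := mul_nonneg (by linarith) hrI'.le
  have k1 : (0:ℝ) ≤ ((L * kF ^ 2 - (L - 1) * ((kF:ℝ) - rF) * rI) * rI) *
      ((rF:ℝ) * x + (kF:ℝ) * y - L * kF * rF * ℓ) :=
    mul_nonneg hA (by linarith)
  have k2 : (0:ℝ) ≤ (((kF:ℝ) - rF) * rI) *
      (((L - 1) * rF + kF) * x * rI + L * ((rI:ℝ) - kF) * y * kF - L * (L - 1) * rF * kF * rI * ℓ) :=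
    mul_nonneg hB (by linarith)
  rw [ge_iff_le, div_le_iff₀ hS]
  have key : L ^ 2 * (kF:ℝ) ^ 2 * rF * ℓ * (kF * rI) ≤
      (x + y) * ((kF:ℝ) * rI - (rF:ℝ) * rI + L * kF * rF) * (kF * rI) := by
    nlinarith [k1, k2]
  exact le_of_mul_le_mul_right key (by positivity)
end

section
/- Let λ ≥ 2 and positive integers satisfy r^F < k^F ≤ r^I, r^I < (λ−1)·r^F + k^F, and λ·(k^F)² − (λ−1)·(k^F − r^F)·r^I ≤ 0, and let ℓ > 0. If x, y are reals with 0 ≤ x ≤ λ·k^F·ℓ, 0 ≤ y ≤ r^I·ℓ, r^F·x + k^F·y ≥ λ·k^F·r^F·ℓ, and ((λ−1)·r^F + k^F)·x/k^F + λ·(r^I − k^F)·y/r^I ≥ λ·(λ−1)·r^F·ℓ, then x + y ≥ r^I·ℓ + λ·k^F·((λ−1)·r^F − (r^I − k^F))·ℓ / ((λ−1)·r^F + k^F). -/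
theorem bound3_case3_lp (lam kF rF rI : ℕ) (hlam : 2 ≤ lam)
    (hrF : 0 < rF) (hkF : 0 < kF) (hrI : 0 < rI)
    (h1 : rF < kF) (h2 : kF ≤ rI) (h3 : rI < (lam - 1) * rF + kF)
    (h4 : (lam : ℤ) * kF ^ 2 - ((lam : ℤ) - 1) * ((kF : ℤ) - rF) * rI ≤ 0)
    (ℓ : ℝ) (hℓ : 0 < ℓ) (x y : ℝ)
    (hx0 : 0 ≤ x) (hx1 : x ≤ (lam : ℝ) * kF * ℓ)
    (hy0 : 0 ≤ y) (hy1 : y ≤ (rI : ℝ) * ℓ)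
    (hc1 : (rF : ℝ) * x + (kF : ℝ) * y ≥ (lam : ℝ) * kF * rF * ℓ)
    (hc2 : (((lam : ℝ) - 1) * rF + kF) * x / kF + (lam : ℝ) * ((rI : ℝ) - kF) * y / rI
      ≥ (lam : ℝ) * ((lam : ℝ) - 1) * rF * ℓ) :
    x + y ≥ (rI : ℝ) * ℓ +
      (lam : ℝ) * kF * (((lam : ℝ) - 1) * rF - ((rI : ℝ) - kF)) * ℓ /
        (((lam : ℝ) - 1) * rF + kF) := by
  have hL : (2:ℝ) ≤ (lam:ℝ) := by exact_mod_cast hlam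
  have hrF' : (0:ℝ) < rF := by exact_mod_cast hrF
  have hkF' : (0:ℝ) < kF := by exact_mod_cast hkF
  have hrI' : (0:ℝ) < rI := by exact_mod_cast hrI
  have hC : (0:ℝ) < ((lam:ℝ)-1)*rF + kF := by nlinarith
  have h4' : (lam:ℝ) * (kF:ℝ)^2 ≤ ((lam:ℝ)-1)*((kF:ℝ)-(rF:ℝ))*(rI:ℝ) := by
    have h4r : ((lam : ℤ) * kF ^ 2 - ((lam : ℤ) - 1) * ((kF : ℤ) - rF) * rI : ℝ) ≤ 0 := by
      exact_mod_cast Int.cast_le.mpr h4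
    push_cast at h4r
    linarith
  have hs : (((lam:ℝ)-1)*rF + kF) * rI ≤ (lam:ℝ)*kF*((rI:ℝ)-kF) := by nlinarith
  -- clear denominators in hc2
  have hc2' : (((lam:ℝ)-1)*rF + kF)*rI*x + (lam:ℝ)*((rI:ℝ)-kF)*kF*y
      ≥ (lam:ℝ)*((lam:ℝ)-1)*rF*ℓ*kF*rI := by
    have hkne : (kF:ℝ) ≠ 0 := ne_of_gt hkF'
    have hrne : (rI:ℝ) ≠ 0 := ne_of_gt hrI'
    rw [ge_iff_le, div_add_div _ _ hkne hrne, le_div_iff₀ (by positivity)] at hc2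
    nlinarith [hc2]
  have hfin : (lam:ℝ) * kF * (((lam:ℝ)-1)*rF - ((rI:ℝ)-kF)) * ℓ / (((lam:ℝ)-1)*rF + kF)
      ≤ x + y - (rI:ℝ)*ℓ := by
    rw [div_le_iff₀ hC]
    have hprod : (0:ℝ) ≤ ((lam:ℝ)*kF*((rI:ℝ)-kF) - (((lam:ℝ)-1)*rF + kF)*rI) * ((rI:ℝ)*ℓ - y) :=
    mul_nonneg (by linarith) (by linarith)
    nlinarith [hc2', hprod, hrI', mul_pos hrI' hC]
  linarith
end

section
/- Let λ ≥ 2 and positive integers satisfy r^F < k^F, (λ−1)·r^F + k^F ≤ r^I < λ·k^F, and λ·(k^F)² − (λ−1)·(k^F − r^F)·r^I ≤ 0, and let ℓ > 0. If x, y are reals with 0 ≤ x ≤ λ·k^F·ℓ, 0 ≤ y ≤ r^I·ℓ, r^F·x + k^F·y ≥ λ·k^F·r^F·ℓ, and ((λ−1)·r^F + k^F)·x/k^F + λ·(r^I − k^F)·y/r^I ≥ λ·(λ−1)·r^F·ℓ, then x + y ≥ (λ−1)·r^F·r^I·ℓ / (r^I − k^F). -/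
theorem bound3_case4_lp (lam kF rF rI : ℕ) (hlam : 2 ≤ lam)
    (hrF : 0 < rF) (hkF : 0 < kF) (hrI : 0 < rI)
    (h1 : rF < kF) (h2 : (lam - 1) * rF + kF ≤ rI) (h3 : rI < lam * kF)
    (h4 : (lam : ℤ) * kF ^ 2 - ((lam : ℤ) - 1) * ((kF : ℤ) - rF) * rI ≤ 0)
    (ℓ : ℝ) (hℓ : 0 < ℓ) (x y : ℝ)
    (hx0 : 0 ≤ x) (hx1 : x ≤ (lam : ℝ) * kF * ℓ)
    (hy0 : 0 ≤ y) (hy1 : y ≤ (rI : ℝ) * ℓ)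
    (hc1 : (rF : ℝ) * x + (kF : ℝ) * y ≥ (lam : ℝ) * kF * rF * ℓ)
    (hc2 : (((lam : ℝ) - 1) * rF + kF) * x / kF + (lam : ℝ) * ((rI : ℝ) - kF) * y / rI
      ≥ (lam : ℝ) * ((lam : ℝ) - 1) * rF * ℓ) :
    x + y ≥ ((lam : ℝ) - 1) * rF * rI * ℓ / ((rI : ℝ) - kF) := by
  have hkR : (0:ℝ) < (kF:ℝ) := by exact_mod_cast hkF
  have hrIR : (0:ℝ) < (rI:ℝ) := by exact_mod_cast hrI
  have hrFR : (0:ℝ) < (rF:ℝ) := by exact_mod_cast hrF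
  have hlamR : (2:ℝ) ≤ (lam:ℝ) := by exact_mod_cast hlam
  have h2R : ((lam:ℝ) - 1) * rF + kF ≤ rI := by
    have : ((lam - 1 : ℕ) : ℝ) * rF + kF ≤ rI := by exact_mod_cast h2
    rwa [Nat.cast_sub (by omega), Nat.cast_one] at this
  have h4R : (lam:ℝ) * kF ^ 2 ≤ ((lam:ℝ) - 1) * ((kF:ℝ) - rF) * rI := by
    have : ((lam:ℤ) * kF ^ 2 : ℤ) ≤ ((lam:ℤ) - 1) * ((kF:ℤ) - rF) * rI := by linarith
    exact_mod_cast this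
  have hkFrI : (kF:ℝ) < (rI:ℝ) := by nlinarith
  -- clear denominators in hc2
  have hc2' : (lam:ℝ) * ((lam:ℝ) - 1) * rF * ℓ * (kF * rI) ≤
      (((lam:ℝ) - 1) * rF + kF) * x * rI + (lam:ℝ) * ((rI:ℝ) - kF) * y * kF := by
    have h := mul_le_mul_of_nonneg_right hc2 (by positivity : (0:ℝ) ≤ (kF:ℝ) * rI)
    calc (lam:ℝ) * ((lam:ℝ) - 1) * rF * ℓ * (kF * rI)
        ≤ ((((lam:ℝ) - 1) * rF + kF) * x / kF + (lam:ℝ) * ((rI:ℝ) - kF) * y / rI) * (kF * rI) := h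
      _ = (((lam:ℝ) - 1) * rF + kF) * x * rI + (lam:ℝ) * ((rI:ℝ) - kF) * y * kF := by
          field_simp
  rw [ge_iff_le, div_le_iff₀ (by linarith : (0:ℝ) < (rI:ℝ) - kF)]
  have hlk : (0:ℝ) < (lam:ℝ) * kF := by nlinarith
  nlinarith [hc2', mul_nonneg hx0 (sub_nonneg.2 h4R), hlk]
end

section
/- Let λ ≥ 2 be a natural number and r^F ≤ r^I ≤ k^F positive integers with r^I ≤ λ·r^F and r^F ≤ k^F. Then (λ·k^F − (k^F − r^F)·r^I/r^F) / (λ·r^F·((λ−1)·k^F + r^I)/((λ−1)·r^F + r^I)) = 1 − r^I·(k^F − r^F)·(r^I − r^F) / (λ·(r^F)²·((λ−1)·k^F + r^I)), and this quantity is at most 1. -/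
theorem comparison_case_rI_le_lam_rF (lam kF rF rI : ℕ) (hlam : 2 ≤ lam)
    (hrF : 0 < rF) (hrI : 0 < rI) (hkF : 0 < kF)
    (h1 : rF ≤ rI) (h2 : rI ≤ kF) (h3 : rI ≤ lam * rF) :
    ((lam : ℝ) * kF - ((kF : ℝ) - rF) * rI / rF) /
        ((lam : ℝ) * rF * (((lam : ℝ) - 1) * kF + rI) / (((lam : ℝ) - 1) * rF + rI))
      = 1 - (rI : ℝ) * ((kF : ℝ) - rF) * ((rI : ℝ) - rF) /
          ((lam : ℝ) * (rF : ℝ) ^ 2 * (((lam : ℝ) - 1) * kF + rI)) ∧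
    ((lam : ℝ) * kF - ((kF : ℝ) - rF) * rI / rF) /
        ((lam : ℝ) * rF * (((lam : ℝ) - 1) * kF + rI) / (((lam : ℝ) - 1) * rF + rI))
      ≤ 1 := by
  have hlamR : (2 : ℝ) ≤ (lam : ℝ) := by exact_mod_cast hlam
  have hrFR : (0 : ℝ) < rF := by exact_mod_cast hrF
  have hrIR : (0 : ℝ) < rI := by exact_mod_cast hrI
  have hkFR : (0 : ℝ) < kF := by exact_mod_cast hkF
  have h1R : (rF : ℝ) ≤ rI := by exact_mod_cast h1
  have h2R : (rI : ℝ) ≤ kF := by exact_mod_cast h2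
  have hl1 : (1 : ℝ) ≤ (lam : ℝ) - 1 := by linarith
  have hA : (0 : ℝ) < ((lam : ℝ) - 1) * kF + rI := by nlinarith
  have hB : (0 : ℝ) < ((lam : ℝ) - 1) * rF + rI := by nlinarith
  have hlam0 : (0 : ℝ) < lam := by linarith
  have heq : ((lam : ℝ) * kF - ((kF : ℝ) - rF) * rI / rF) /
        ((lam : ℝ) * rF * (((lam : ℝ) - 1) * kF + rI) / (((lam : ℝ) - 1) * rF + rI))
      = 1 - (rI : ℝ) * ((kF : ℝ) - rF) * ((rI : ℝ) - rF) /
          ((lam : ℝ) * (rF : ℝ) ^ 2 * (((lam : ℝ) - 1) * kF + rI)) := by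
    field_simp
    ring
  refine ⟨heq, ?_⟩
  rw [heq]
  have : (0 : ℝ) ≤ (rI : ℝ) * ((kF : ℝ) - rF) * ((rI : ℝ) - rF) /
      ((lam : ℝ) * (rF : ℝ) ^ 2 * (((lam : ℝ) - 1) * kF + rI)) := by
    apply div_nonneg
    · exact mul_nonneg (mul_nonneg hrIR.le (by linarith)) (by linarith)
    · positivity
  linarith
end

section
/- Let λ ≥ 2 and positive integers r^F < k^F ≤ r^I < λ·k^F with λ·(k^F)² − (λ−1)·(k^F − r^F)·r^I ≥ 0 and r^I < λ·r^F. Then (λ·k^F − r^I·(k^F/r^F − 1)) / (λ²·(k^F)²·r^F / (k^F·r^I − r^F·r^I + λ·k^F·r^F)) = ((λ·k^F·r^F)² − (r^I·(k^F − r^F))²) / (λ·k^F·r^F)², and this ratio is strictly less than 1. -/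
theorem comparison_thm3_case2 (lam kF rF rI : ℕ) (hlam : 2 ≤ lam)
    (hrF : 0 < rF) (hkF : 0 < kF) (hrI : 0 < rI)
    (h1 : rF < kF) (h2 : kF ≤ rI) (h3 : rI < lam * kF)
    (h4 : (lam : ℤ) * kF ^ 2 - ((lam : ℤ) - 1) * ((kF : ℤ) - rF) * rI ≥ 0)
    (h5 : rI < lam * rF) :
    ((lam : ℝ) * kF - (rI : ℝ) * ((kF : ℝ) / rF - 1)) /
        ((lam : ℝ) ^ 2 * (kF : ℝ) ^ 2 * rF /
          ((kF : ℝ) * rI - (rF : ℝ) * rI + (lam : ℝ) * kF * rF))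
      = (((lam : ℝ) * kF * rF) ^ 2 - ((rI : ℝ) * ((kF : ℝ) - rF)) ^ 2) /
          ((lam : ℝ) * kF * rF) ^ 2 ∧
    ((lam : ℝ) * kF - (rI : ℝ) * ((kF : ℝ) / rF - 1)) /
        ((lam : ℝ) ^ 2 * (kF : ℝ) ^ 2 * rF /
          ((kF : ℝ) * rI - (rF : ℝ) * rI + (lam : ℝ) * kF * rF))
      < 1 := by
  have hl : (2 : ℝ) ≤ lam := by exact_mod_cast hlam
  have hrF' : (0 : ℝ) < rF := by exact_mod_cast hrF
  have hkF' : (0 : ℝ) < kF := by exact_mod_cast hkF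
  have hrI' : (0 : ℝ) < rI := by exact_mod_cast hrI
  have h1' : (rF : ℝ) < kF := by exact_mod_cast h1
  have hlam' : (0 : ℝ) < lam := by linarith
  have hden : (0 : ℝ) < (kF : ℝ) * rI - (rF : ℝ) * rI + (lam : ℝ) * kF * rF := by
    nlinarith [mul_pos hrI' (sub_pos.2 h1'), mul_pos (mul_pos hlam' hkF') hrF']
  have heq : ((lam : ℝ) * kF - (rI : ℝ) * ((kF : ℝ) / rF - 1)) /
        ((lam : ℝ) ^ 2 * (kF : ℝ) ^ 2 * rF /
          ((kF : ℝ) * rI - (rF : ℝ) * rI + (lam : ℝ) * kF * rF))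
      = (((lam : ℝ) * kF * rF) ^ 2 - ((rI : ℝ) * ((kF : ℝ) - rF)) ^ 2) /
          ((lam : ℝ) * kF * rF) ^ 2 := by
    have hdne := hden.ne'
    have hp := (mul_pos (mul_pos hlam' hkF') hrF').ne'
    field_simp
    ring
  refine ⟨heq, ?_⟩
  rw [heq]
  rw [div_lt_one (pow_pos (mul_pos (mul_pos hlam' hkF') hrF') 2)]
  have : (0 : ℝ) < ((rI : ℝ) * ((kF : ℝ) - rF)) ^ 2 := pow_pos (mul_pos hrI' (sub_pos.2 h1')) 2
  linarith
end
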